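/- arXiv:2303.06198 — 3 statements merged into one kernel-verified Lean document; each statement's English description precedes it below -/
import Mathlib

section
/- Let X be a rank-r matrix and Y = X + E. If Û denotes the matrix whose columns are the top r left singular vectors of Y and Û⊥ its orthogonal complement, then ‖Û⊥ Û⊥ᵀ X‖ ≤ 2‖E‖ in the spectral norm. -/
open Matrix
open scoped Matrix.Norms.L2Operator

noncomputable def spec {m n : ℕ} (A : Matrix (Fin m) (Fin n) ℝ) : ℝ :=
  ‖(Matrix.toEuclideanLin A).toContinuousLinearMap‖

noncomputable def rowNorm {m n : ℕ} (A : Matrix (Fin m) (Fin n) ℝ) : ℝ :=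
  ⨆ i, Real.sqrt (∑ j, A i j ^ 2)

section helpers
variable {m n p : ℕ}

lemma spec_eq (A : Matrix (Fin m) (Fin n) ℝ) : spec A = ‖A‖ := rfl

lemma spec_nonneg (A : Matrix (Fin m) (Fin n) ℝ) : 0 ≤ spec A := norm_nonneg _

lemma norm_le_one_of_orth (A : Matrix (Fin m) (Fin n) ℝ) (h : Aᵀ * A = 1) : ‖A‖ ≤ 1 := by
  have h1 : ‖Aᴴ * A‖ = ‖A‖ * ‖A‖ := Matrix.l2_opNorm_conjTranspose_mul_self A
  rw [Matrix.conjTranspose_eq_transpose_of_trivial, h] at h1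
  have h3 : ‖(1 : Matrix (Fin n) (Fin n) ℝ)‖ ≤ 1 := by
    rw [Matrix.cstar_norm_def, _root_.map_one]
    exact ContinuousLinearMap.norm_id_le
  nlinarith [norm_nonneg A]

lemma norm_transpose (A : Matrix (Fin m) (Fin n) ℝ) : ‖Aᵀ‖ = ‖A‖ := by
  rw [← Matrix.conjTranspose_eq_transpose_of_trivial]
  exact Matrix.l2_opNorm_conjTranspose A

lemma norm_sq_eq (v : Fin m → ℝ) :
    ‖(WithLp.equiv 2 (Fin m → ℝ)).symm v‖ ^ 2 = ∑ i, v i ^ 2 := by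
  rw [EuclideanSpace.norm_eq, Real.sq_sqrt (by positivity)]
  simp [Real.norm_eq_abs, sq_abs]

lemma le_norm_mulVec (A : Matrix (Fin m) (Fin n) ℝ) (x : Fin n → ℝ) :
    ‖(WithLp.equiv 2 (Fin m → ℝ)).symm (A *ᵥ x)‖ ≤ ‖A‖ * ‖(WithLp.equiv 2 (Fin n → ℝ)).symm x‖ := by
  simpa using Matrix.l2_opNorm_mulVec A ((WithLp.equiv 2 (Fin n → ℝ)).symm x)

lemma norm_le_of_forall (A : Matrix (Fin m) (Fin n) ℝ) {c : ℝ} (hc : 0 ≤ c)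
    (h : ∀ x : Fin n → ℝ, ‖(WithLp.equiv 2 (Fin m → ℝ)).symm (A *ᵥ x)‖ ≤
      c * ‖(WithLp.equiv 2 (Fin n → ℝ)).symm x‖) : ‖A‖ ≤ c := by
  rw [Matrix.l2_opNorm_def]
  refine ContinuousLinearMap.opNorm_le_bound _ hc fun x => ?_
  simpa [Matrix.toEuclideanLin_apply] using h (WithLp.equiv 2 (Fin n → ℝ) x)

lemma norm_mulVec_of_orth (A : Matrix (Fin m) (Fin n) ℝ) (h : Aᵀ * A = 1) (x : Fin n → ℝ) :
    ‖(WithLp.equiv 2 (Fin m → ℝ)).symm (A *ᵥ x)‖ = ‖(WithLp.equiv 2 (Fin n → ℝ)).symm x‖ := by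
  set y : EuclideanSpace ℝ (Fin n) := (WithLp.equiv 2 (Fin n → ℝ)).symm x with hy
  have hA : (WithLp.equiv 2 (Fin m → ℝ)).symm (A *ᵥ x) = Matrix.toEuclideanLin A y := by
    rw [hy, WithLp.equiv_symm_apply, WithLp.equiv_symm_apply, Matrix.toEuclideanLin_apply_piLp_toLp]
  have key : (inner ℝ (Matrix.toEuclideanLin A y) (Matrix.toEuclideanLin A y) : ℝ) = inner ℝ y y := by
    have h2 : Matrix.toEuclideanLin Aᴴ (Matrix.toEuclideanLin A y) = y := by
      rw [hy, WithLp.equiv_symm_apply, Matrix.toEuclideanLin_apply_piLp_toLp,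
        Matrix.toEuclideanLin_apply_piLp_toLp, Matrix.mulVec_mulVec,
        Matrix.conjTranspose_eq_transpose_of_trivial, h, Matrix.one_mulVec]
    calc (inner ℝ (Matrix.toEuclideanLin A y) (Matrix.toEuclideanLin A y) : ℝ)
        = inner ℝ (Matrix.toEuclideanLin Aᴴ (Matrix.toEuclideanLin A y)) y := by
          rw [Matrix.toEuclideanLin_conjTranspose_eq_adjoint, LinearMap.adjoint_inner_left]
      _ = inner ℝ y y := by rw [h2]
  rw [hA]
  have h3 := key
  rw [real_inner_self_eq_norm_sq, real_inner_self_eq_norm_sq] at h3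
  nlinarith [norm_nonneg (Matrix.toEuclideanLin A y), norm_nonneg y]

end helpers

section sums
variable {N M : ℕ}

lemma sum_fin_restrict (h : M ≤ N) (g : Fin N → ℝ)
    (hg : ∀ l : Fin N, M ≤ (l : ℕ) → g l = 0) :
    ∑ l : Fin N, g l = ∑ i : Fin M, g (Fin.castLE h i) := by
  set G : ℕ → ℝ := fun l => if hl : l < N then g ⟨l, hl⟩ else 0 with hG
  have h1 : ∑ l : Fin N, g l = ∑ l ∈ Finset.range N, G l := by
    rw [← Fin.sum_univ_eq_sum_range]
    exact Finset.sum_congr rfl fun l _ => by simp [hG, l.isLt]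
  have h2 : ∑ i : Fin M, g (Fin.castLE h i) = ∑ l ∈ Finset.range M, G l := by
    rw [← Fin.sum_univ_eq_sum_range]
    refine Finset.sum_congr rfl fun i _ => ?_
    have : (i : ℕ) < N := lt_of_lt_of_le i.isLt h
    simp only [hG, this, dif_pos]
    rfl
  rw [h1, h2]
  rw [Finset.sum_subset (Finset.range_subset_range.mpr h)]
  intro x hx hx2
  simp only [Finset.mem_range] at hx hx2
  simp only [hG, hx, dif_pos]
  exact hg _ (le_of_not_gt hx2)

lemma sum_fin_restrict_le (h : M ≤ N) (g : Fin N → ℝ) (hg : ∀ l, 0 ≤ g l) :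
    ∑ i : Fin M, g (Fin.castLE h i) ≤ ∑ l : Fin N, g l := by
  set G : ℕ → ℝ := fun l => if hl : l < N then g ⟨l, hl⟩ else 0 with hG
  have h1 : ∑ l : Fin N, g l = ∑ l ∈ Finset.range N, G l := by
    rw [← Fin.sum_univ_eq_sum_range]
    exact Finset.sum_congr rfl fun l _ => by simp [hG, l.isLt]
  have h2 : ∑ i : Fin M, g (Fin.castLE h i) = ∑ l ∈ Finset.range M, G l := by
    rw [← Fin.sum_univ_eq_sum_range]
    refine Finset.sum_congr rfl fun i _ => ?_
    have : (i : ℕ) < N := lt_of_lt_of_le i.isLt h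
    simp only [hG, this, dif_pos]
    rfl
  rw [h1, h2]
  refine Finset.sum_le_sum_of_subset_of_nonneg (Finset.range_subset_range.mpr h) fun l _ _ => ?_
  simp only [hG]
  split
  · exact hg _
  · exact le_refl 0
end sums

open scoped Matrix.Norms.L2Operator in
lemma weyl_bound {n₁ n₂ r : ℕ} (hr1 : r < n₁) (hr2 : r < n₂)
    (X E : Matrix (Fin n₁) (Fin n₂) ℝ)
    (U : Matrix (Fin n₁) (Fin n₁) ℝ) (V : Matrix (Fin n₂) (Fin n₂) ℝ)
    (s : Fin n₁ → ℝ)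
    (hX : X.rank = r)
    (hU : Uᵀ * U = 1) (hV : Vᵀ * V = 1)
    (hs0 : ∀ i, 0 ≤ s i) (hsmono : ∀ i j : Fin n₁, i ≤ j → s j ≤ s i)
    (hSVD : X + E =
      U * (Matrix.of fun (i : Fin n₁) (j : Fin n₂) => if (i : ℕ) = (j : ℕ) then s i else 0) * Vᵀ) :
    s ⟨r, hr1⟩ ≤ ‖E‖ := by
  classical
  set S : Matrix (Fin n₁) (Fin n₂) ℝ :=
    Matrix.of fun (i : Fin n₁) (j : Fin n₂) => if (i : ℕ) = (j : ℕ) then s i else 0 with hS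
  have hr2' : r + 1 ≤ n₂ := hr2
  have hr1' : r + 1 ≤ n₁ := hr1
  -- kernel of X
  set K := LinearMap.ker X.mulVecLin with hKdef
  have hK : Module.finrank ℝ K = n₂ - r := by
    have h1 := LinearMap.finrank_range_add_finrank_ker X.mulVecLin
    rw [← hKdef] at h1
    rw [Module.finrank_pi] at h1
    have h2 : Module.finrank ℝ (LinearMap.range X.mulVecLin) = r := hX
    simp only [Fintype.card_fin] at h1
    omega
  -- the span of the top r+1 right singular vectors
  set f : Fin (r + 1) → (Fin n₂ → ℝ) := fun i k => V k (Fin.castLE hr2' i) with hf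
  have hf_eq : ∀ i, f i = V *ᵥ Pi.single (Fin.castLE hr2' i) 1 := by
    intro i; funext k
    rw [Matrix.mulVec_single]
    simp [hf]
  have hVleft : ∀ z : Fin n₂ → ℝ, Vᵀ *ᵥ (V *ᵥ z) = z := fun z => by
    rw [Matrix.mulVec_mulVec, hV, Matrix.one_mulVec]
  have hVinj : LinearMap.ker (V.mulVecLin) = ⊥ := by
    rw [LinearMap.ker_eq_bot]
    intro a b hab
    simp only [Matrix.mulVecLin_apply] at hab
    have := congrArg (fun z => Vᵀ *ᵥ z) hab
    simpa [hVleft] using this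
  have hg : LinearIndependent ℝ (fun i : Fin (r + 1) =>
      Pi.single (M := fun _ : Fin n₂ => ℝ) (Fin.castLE hr2' i) (1 : ℝ)) := by
    have hb := (Pi.basisFun ℝ (Fin n₂)).linearIndependent
    have := hb.comp (Fin.castLE hr2') (Fin.castLE_injective hr2')
    simpa [Function.comp_def, Pi.basisFun_apply] using this
  have hflin : LinearIndependent ℝ f := by
    have : f = V.mulVecLin ∘ fun i : Fin (r + 1) =>
        Pi.single (M := fun _ : Fin n₂ => ℝ) (Fin.castLE hr2' i) (1 : ℝ) := by
      funext i; rw [hf_eq i]; rfl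
    rw [this]
    exact hg.map' V.mulVecLin hVinj
  set W := Submodule.span ℝ (Set.range f) with hWdef
  have hW : Module.finrank ℝ W = r + 1 := by
    rw [finrank_span_eq_card hflin, Fintype.card_fin]
  -- intersect
  have hsum := Submodule.finrank_sup_add_finrank_inf_eq W K
  have hle : Module.finrank ℝ ↥(W ⊔ K) ≤ n₂ := by
    have := Submodule.finrank_le (W ⊔ K)
    rwa [Module.finrank_pi, Fintype.card_fin] at this
  have hpos : 0 < Module.finrank ℝ ↥(W ⊓ K) := by omega
  have : Nontrivial ↥(W ⊓ K) := Module.nontrivial_of_finrank_pos hpos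
  obtain ⟨⟨v, hvmem⟩, hvne⟩ := exists_ne (0 : ↥(W ⊓ K))
  have hv0 : v ≠ 0 := fun h => hvne (Subtype.ext h)
  obtain ⟨hvW, hvK⟩ := hvmem
  have hXv : X *ᵥ v = 0 := hvK
  -- write v = V *ᵥ c'
  have hvW' : v ∈ Submodule.span ℝ (Set.range f) := hvW
  rw [Submodule.mem_span_range_iff_exists_fun] at hvW'
  obtain ⟨c, hc⟩ := hvW'
  set c' : Fin n₂ → ℝ := fun k => if h : (k : ℕ) < r + 1 then c ⟨k, h⟩ else 0 with hc'def
  have hc'castLE : ∀ i : Fin (r + 1), c' (Fin.castLE hr2' i) = c i := by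
    intro i
    simp [hc'def, Fin.coe_castLE, i.isLt]
    intro h; exact absurd h (by have := i.isLt; omega)
  have hvc : V *ᵥ c' = v := by
    funext k
    have h1 : (V *ᵥ c') k = ∑ l : Fin n₂, V k l * c' l := by
      simp [Matrix.mulVec, dotProduct]
    have h2 : ∑ l : Fin n₂, V k l * c' l
        = ∑ i : Fin (r + 1), V k (Fin.castLE hr2' i) * c' (Fin.castLE hr2' i) :=
      sum_fin_restrict hr2' _ (fun l hl => by
        have hz : c' l = 0 := dif_neg (by omega)
        rw [hz, mul_zero])
    rw [h1, h2, ← hc]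
    simp only [Finset.sum_apply, Pi.smul_apply, smul_eq_mul]
    refine Finset.sum_congr rfl fun i _ => ?_
    rw [hc'castLE i, mul_comm]
  have hVtv : Vᵀ *ᵥ v = c' := by rw [← hvc, hVleft]
  have hEv : E *ᵥ v = U *ᵥ (S *ᵥ c') := by
    have hXE : (X + E) *ᵥ v = U *ᵥ (S *ᵥ (Vᵀ *ᵥ v)) := by
      rw [hSVD, ← Matrix.mulVec_mulVec, ← Matrix.mulVec_mulVec]
    rw [Matrix.add_mulVec, hXv, zero_add] at hXE
    rw [hXE, hVtv]
  have hnv : ‖(WithLp.equiv 2 (Fin n₂ → ℝ)).symm v‖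
      = ‖(WithLp.equiv 2 (Fin n₂ → ℝ)).symm c'‖ := by
    rw [← hvc]; exact norm_mulVec_of_orth V hV c'
  have hnE : ‖(WithLp.equiv 2 (Fin n₁ → ℝ)).symm (E *ᵥ v)‖
      = ‖(WithLp.equiv 2 (Fin n₁ → ℝ)).symm (S *ᵥ c')‖ := by
    rw [hEv]; exact norm_mulVec_of_orth U hU _
  have hw : ∀ i : Fin n₁, (S *ᵥ c') i = if h : (i : ℕ) < n₂ then s i * c' ⟨i, h⟩ else 0 := by
    intro i
    by_cases h : (i : ℕ) < n₂
    · rw [dif_pos h]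
      have h1 : (S *ᵥ c') i = ∑ k : Fin n₂, (if (i : ℕ) = (k : ℕ) then s i else 0) * c' k := by
        simp [Matrix.mulVec, dotProduct, hS]
      rw [h1, Finset.sum_eq_single (⟨(i : ℕ), h⟩ : Fin n₂)]
      · rw [if_pos rfl]
      · intro k _ hk
        rw [if_neg (fun hik => hk (Fin.val_injective hik.symm)), zero_mul]
      · intro hmem; exact absurd (Finset.mem_univ _) hmem
    · rw [dif_neg h]
      have h1 : (S *ᵥ c') i = ∑ k : Fin n₂, (if (i : ℕ) = (k : ℕ) then s i else 0) * c' k := by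
        simp [Matrix.mulVec, dotProduct, hS]
      rw [h1]
      apply Finset.sum_eq_zero
      intro k _
      rw [if_neg (by have := k.isLt; omega), zero_mul]
  set σ := s ⟨r, hr1⟩ with hσ
  have hσ0 : 0 ≤ σ := hs0 _
  have hlow : σ ^ 2 * ‖(WithLp.equiv 2 (Fin n₂ → ℝ)).symm c'‖ ^ 2
      ≤ ‖(WithLp.equiv 2 (Fin n₁ → ℝ)).symm (S *ᵥ c')‖ ^ 2 := by
    rw [norm_sq_eq, norm_sq_eq, Finset.mul_sum]
    have hc'sum : ∑ k : Fin n₂, σ ^ 2 * c' k ^ 2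
        = ∑ i : Fin (r + 1), σ ^ 2 * c' (Fin.castLE hr2' i) ^ 2 :=
      sum_fin_restrict hr2' _ (fun l hl => by
        have hz : c' l = 0 := dif_neg (by omega)
        rw [hz]; ring)
    rw [hc'sum]
    have hstep : ∑ i : Fin (r + 1), σ ^ 2 * c' (Fin.castLE hr2' i) ^ 2
        ≤ ∑ i : Fin (r + 1), ((S *ᵥ c') (Fin.castLE hr1' i)) ^ 2 := by
      refine Finset.sum_le_sum fun i _ => ?_
      have hlt2 : ((Fin.castLE hr1' i : Fin n₁) : ℕ) < n₂ := lt_of_lt_of_le i.isLt hr2'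
      rw [hw, dif_pos hlt2]
      have hss : σ ≤ s (Fin.castLE hr1' i) := by
        apply hsmono
        exact Fin.mk_le_mk.mpr (Nat.lt_succ_iff.mp i.isLt)
      have h0 : 0 ≤ s (Fin.castLE hr1' i) := hs0 _
      have hfe : (⟨((Fin.castLE hr1' i : Fin n₁) : ℕ), hlt2⟩ : Fin n₂) = Fin.castLE hr2' i := rfl
      rw [hfe, mul_pow]
      have hsq : σ ^ 2 ≤ s (Fin.castLE hr1' i) ^ 2 := pow_le_pow_left₀ hσ0 hss 2
      exact mul_le_mul_of_nonneg_right hsq (sq_nonneg _)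
    exact hstep.trans (sum_fin_restrict_le hr1' _ (fun l => sq_nonneg _))
  have hup : ‖(WithLp.equiv 2 (Fin n₁ → ℝ)).symm (E *ᵥ v)‖
      ≤ ‖E‖ * ‖(WithLp.equiv 2 (Fin n₂ → ℝ)).symm v‖ := le_norm_mulVec E v
  have hvpos : 0 < ‖(WithLp.equiv 2 (Fin n₂ → ℝ)).symm v‖ := by
    rw [norm_pos_iff]
    simpa using hv0
  have hb : σ * ‖(WithLp.equiv 2 (Fin n₂ → ℝ)).symm c'‖
      ≤ ‖(WithLp.equiv 2 (Fin n₁ → ℝ)).symm (S *ᵥ c')‖ := by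
    nlinarith [norm_nonneg ((WithLp.equiv 2 (Fin n₁ → ℝ)).symm (S *ᵥ c')),
      mul_nonneg hσ0 (norm_nonneg ((WithLp.equiv 2 (Fin n₂ → ℝ)).symm c'))]
  have h1 : σ * ‖(WithLp.equiv 2 (Fin n₂ → ℝ)).symm v‖
      ≤ ‖E‖ * ‖(WithLp.equiv 2 (Fin n₂ → ℝ)).symm v‖ := by
    calc σ * ‖(WithLp.equiv 2 (Fin n₂ → ℝ)).symm v‖
        = σ * ‖(WithLp.equiv 2 (Fin n₂ → ℝ)).symm c'‖ := by rw [hnv]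
      _ ≤ ‖(WithLp.equiv 2 (Fin n₁ → ℝ)).symm (S *ᵥ c')‖ := hb
      _ = ‖(WithLp.equiv 2 (Fin n₁ → ℝ)).symm (E *ᵥ v)‖ := hnE.symm
      _ ≤ ‖E‖ * ‖(WithLp.equiv 2 (Fin n₂ → ℝ)).symm v‖ := hup
  exact le_of_mul_le_mul_right h1 hvpos

lemma sum_shift_le {m n₂ r : ℕ} (F : ℕ → ℝ) (hF0 : ∀ k, 0 ≤ F k) (hFz : ∀ k, n₂ ≤ k → F k = 0) :
    ∑ j ∈ Finset.range m, F (r + j) ≤ ∑ k ∈ Finset.range n₂, F k := by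
  have h1 : ∑ j ∈ Finset.range m, F (r + j)
      = ∑ j ∈ (Finset.range m).filter (fun j => r + j < n₂), F (r + j) := by
    symm
    apply Finset.sum_subset (Finset.filter_subset _ _)
    intro x hx hx2
    simp only [Finset.mem_filter, Finset.mem_range] at hx hx2
    exact hFz _ (by omega)
  have hinj : ∀ a ∈ (Finset.range m).filter (fun j => r + j < n₂),
      ∀ b ∈ (Finset.range m).filter (fun j => r + j < n₂), r + a = r + b → a = b := by
    intro a _ b _ hab; omega
  rw [h1, ← Finset.sum_image (g := fun j => r + j) (f := F) hinj]
  apply Finset.sum_le_sum_of_subset_of_nonneg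
  · intro k hk
    simp only [Finset.mem_image, Finset.mem_filter, Finset.mem_range] at hk ⊢
    obtain ⟨a, ⟨_, ha2⟩, rfl⟩ := hk
    exact ha2
  · exact fun k _ _ => hF0 k


/-- If Û spans the leading r-dim left singular subspace of Y = X + E with rank X = r,
and Û⊥ its orthogonal complement, then ‖Û⊥ Û⊥ᵀ X‖ ≤ 2‖E‖. -/
theorem stmt0 {n₁ n₂ r : ℕ} (hr : r ≤ n₁)
    (X E : Matrix (Fin n₁) (Fin n₂) ℝ)
    (U : Matrix (Fin n₁) (Fin n₁) ℝ) (V : Matrix (Fin n₂) (Fin n₂) ℝ)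
    (s : Fin n₁ → ℝ)
    (hX : X.rank = r)
    (hU : Uᵀ * U = 1) (hV : Vᵀ * V = 1)
    (hs0 : ∀ i, 0 ≤ s i) (hsmono : ∀ i j : Fin n₁, i ≤ j → s j ≤ s i)
    (hSVD : X + E =
      U * (Matrix.of fun (i : Fin n₁) (j : Fin n₂) => if (i : ℕ) = (j : ℕ) then s i else 0) * Vᵀ) :
    spec ((U.submatrix id (fun j : Fin (n₁ - r) => (⟨r + (j : ℕ), by have := j.isLt; omega⟩ : Fin n₁))) *
          (U.submatrix id (fun j : Fin (n₁ - r) => (⟨r + (j : ℕ), by have := j.isLt; omega⟩ : Fin n₁)))ᵀ * X)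
      ≤ 2 * spec E := by
  classical
  set S : Matrix (Fin n₁) (Fin n₂) ℝ :=
    Matrix.of fun (i : Fin n₁) (j : Fin n₂) => if (i : ℕ) = (j : ℕ) then s i else 0 with hS
  set emb : Fin (n₁ - r) → Fin n₁ := fun j => ⟨r + (j : ℕ), by have := j.isLt; omega⟩ with hemb
  set B : Matrix (Fin n₁) (Fin (n₁ - r)) ℝ := U.submatrix id emb with hB
  show ‖B * Bᵀ * X‖ ≤ 2 * ‖E‖
  have hembv : ∀ j, ((emb j : Fin n₁) : ℕ) = r + (j : ℕ) := fun j => rfl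
  have hBtB : Bᵀ * B = 1 := by
    ext j k
    have h1 : (Bᵀ * B) j k = (Uᵀ * U) (emb j) (emb k) := by
      simp [Matrix.mul_apply, Matrix.transpose_apply, hB]
    rw [h1, hU]
    by_cases hjk : j = k
    · subst hjk; simp [Matrix.one_apply]
    · rw [Matrix.one_apply_ne (fun h => hjk ?_), Matrix.one_apply_ne hjk]
      have := congrArg (fun z : Fin n₁ => (z : ℕ)) h
      simp only [hembv] at this
      exact Fin.val_injective (by omega)
  have hBn : ‖B‖ ≤ 1 := norm_le_one_of_orth _ hBtB
  have hBtn : ‖Bᵀ‖ ≤ 1 := by rw [norm_transpose]; exact hBn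
  have hVn : ‖Vᵀ‖ ≤ 1 := by rw [norm_transpose]; exact norm_le_one_of_orth _ hV
  have hEnn : (0 : ℝ) ≤ ‖E‖ := norm_nonneg _
  -- Bᵀ (X + E) = Σ₂ Vᵀ
  have hBU : Bᵀ * U = (1 : Matrix (Fin n₁) (Fin n₁) ℝ).submatrix emb id := by
    ext j k
    have h1 : (Bᵀ * U) j k = (Uᵀ * U) (emb j) k := by
      simp [Matrix.mul_apply, Matrix.transpose_apply, hB]
    rw [h1, hU]; rfl
  have hBS : (1 : Matrix (Fin n₁) (Fin n₁) ℝ).submatrix emb id * S = S.submatrix emb id := by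
    ext j l
    rw [Matrix.mul_apply]
    rw [Finset.sum_eq_single (emb j)]
    · simp [Matrix.one_apply]
    · intro k _ hk
      simp [Matrix.one_apply, Ne.symm hk]
    · intro hmem; exact absurd (Finset.mem_univ _) hmem
  have hBXE : Bᵀ * (X + E) = S.submatrix emb id * Vᵀ := by
    rw [hSVD, ← Matrix.mul_assoc, ← Matrix.mul_assoc, hBU, hBS]
  have hXd : Bᵀ * X = S.submatrix emb id * Vᵀ - Bᵀ * E := by
    rw [← hBXE, Matrix.mul_add, add_sub_cancel_right]
  -- the key bound on the trailing block
  have hSig : ‖S.submatrix emb id‖ ≤ ‖E‖ := by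
    apply norm_le_of_forall _ hEnn
    intro x
    set F : ℕ → ℝ := fun k => if h : k < n₂ then x ⟨k, h⟩ ^ 2 else 0 with hF
    have hF0 : ∀ k, 0 ≤ F k := by
      intro k; simp only [hF]; split
      · exact sq_nonneg _
      · exact le_refl 0
    have hFz : ∀ k, n₂ ≤ k → F k = 0 := by
      intro k hk; simp only [hF]; rw [dif_neg (by omega)]
    have hentry : ∀ j : Fin (n₁ - r), ((S.submatrix emb id) *ᵥ x) j
        = if h : r + (j : ℕ) < n₂ then s (emb j) * x ⟨r + (j : ℕ), h⟩ else 0 := by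
      intro j
      by_cases h : r + (j : ℕ) < n₂
      · rw [dif_pos h]
        have h1 : ((S.submatrix emb id) *ᵥ x) j
            = ∑ k : Fin n₂, (if r + (j : ℕ) = (k : ℕ) then s (emb j) else 0) * x k := by
          simp [Matrix.mulVec, dotProduct, hS, hembv]
        rw [h1, Finset.sum_eq_single (⟨r + (j : ℕ), h⟩ : Fin n₂)]
        · rw [if_pos rfl]
        · intro k _ hk
          rw [if_neg (fun hik => hk (Fin.val_injective hik.symm)), zero_mul]
        · intro hmem; exact absurd (Finset.mem_univ _) hmem
      · rw [dif_neg h]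
        have h1 : ((S.submatrix emb id) *ᵥ x) j
            = ∑ k : Fin n₂, (if r + (j : ℕ) = (k : ℕ) then s (emb j) else 0) * x k := by
          simp [Matrix.mulVec, dotProduct, hS, hembv]
        rw [h1]
        apply Finset.sum_eq_zero
        intro k _
        rw [if_neg (by have := k.isLt; omega), zero_mul]
    have hterm : ∀ j : Fin (n₁ - r),
        ((S.submatrix emb id) *ᵥ x) j ^ 2 ≤ ‖E‖ ^ 2 * F (r + (j : ℕ)) := by
      intro j
      rw [hentry j]
      by_cases h : r + (j : ℕ) < n₂
      · rw [dif_pos h]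
        have hr1 : r < n₁ := by have := j.isLt; omega
        have hr2 : r < n₂ := by omega
        have hsE : s (emb j) ≤ ‖E‖ := by
          have h1 : s (emb j) ≤ s ⟨r, hr1⟩ := by
            apply hsmono
            exact Fin.mk_le_mk.mpr (by omega)
          exact h1.trans (weyl_bound hr1 hr2 X E U V s hX hU hV hs0 hsmono hSVD)
        have hFp : F (r + (j : ℕ)) = x ⟨r + (j : ℕ), h⟩ ^ 2 := by
          simp only [hF]; rw [dif_pos h]
        rw [hFp, mul_pow]
        have hs2 : s (emb j) ^ 2 ≤ ‖E‖ ^ 2 := pow_le_pow_left₀ (hs0 _) hsE 2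
        exact mul_le_mul_of_nonneg_right hs2 (sq_nonneg _)
      · rw [dif_neg h]
        have : F (r + (j : ℕ)) = 0 := hFz _ (by omega)
        rw [this, mul_zero]
        simp
    -- sum up
    have hsum : ‖(WithLp.equiv 2 (Fin (n₁ - r) → ℝ)).symm ((S.submatrix emb id) *ᵥ x)‖ ^ 2
        ≤ (‖E‖ * ‖(WithLp.equiv 2 (Fin n₂ → ℝ)).symm x‖) ^ 2 := by
      rw [norm_sq_eq, mul_pow, norm_sq_eq]
      calc ∑ j : Fin (n₁ - r), ((S.submatrix emb id) *ᵥ x) j ^ 2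
          ≤ ∑ j : Fin (n₁ - r), ‖E‖ ^ 2 * F (r + (j : ℕ)) := Finset.sum_le_sum fun j _ => hterm j
        _ = ‖E‖ ^ 2 * ∑ j : Fin (n₁ - r), F (r + (j : ℕ)) := by rw [Finset.mul_sum]
        _ ≤ ‖E‖ ^ 2 * ∑ k : Fin n₂, x k ^ 2 := by
            apply mul_le_mul_of_nonneg_left _ (sq_nonneg _)
            have h1 : ∑ j : Fin (n₁ - r), F (r + (j : ℕ))
                = ∑ j ∈ Finset.range (n₁ - r), F (r + j) :=
              Fin.sum_univ_eq_sum_range (fun j => F (r + j)) (n₁ - r)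
            have h2 : ∑ k : Fin n₂, x k ^ 2 = ∑ k ∈ Finset.range n₂, F k := by
              rw [← Fin.sum_univ_eq_sum_range F n₂]
              refine Finset.sum_congr rfl fun k _ => ?_
              simp only [hF]
              rw [dif_pos k.isLt]
            rw [h1, h2]
            exact sum_shift_le F hF0 hFz
    nlinarith [norm_nonneg ((WithLp.equiv 2 (Fin (n₁ - r) → ℝ)).symm ((S.submatrix emb id) *ᵥ x)),
      mul_nonneg hEnn (norm_nonneg ((WithLp.equiv 2 (Fin n₂ → ℝ)).symm x))]
  -- assemble
  have hSigV : ‖S.submatrix emb id * Vᵀ‖ ≤ ‖E‖ := by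
    calc ‖S.submatrix emb id * Vᵀ‖ ≤ ‖S.submatrix emb id‖ * ‖Vᵀ‖ := Matrix.l2_opNorm_mul _ _
      _ ≤ ‖E‖ * 1 := mul_le_mul hSig hVn (norm_nonneg _) hEnn
      _ = ‖E‖ := mul_one _
  have hBE : ‖Bᵀ * E‖ ≤ ‖E‖ := by
    calc ‖Bᵀ * E‖ ≤ ‖Bᵀ‖ * ‖E‖ := Matrix.l2_opNorm_mul _ _
      _ ≤ 1 * ‖E‖ := mul_le_mul_of_nonneg_right hBtn hEnn
      _ = ‖E‖ := one_mul _
  have hBX : ‖Bᵀ * X‖ ≤ 2 * ‖E‖ := by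
    rw [hXd]
    calc ‖S.submatrix emb id * Vᵀ - Bᵀ * E‖
        ≤ ‖S.submatrix emb id * Vᵀ‖ + ‖Bᵀ * E‖ := norm_sub_le _ _
      _ ≤ ‖E‖ + ‖E‖ := add_le_add hSigV hBE
      _ = 2 * ‖E‖ := by ring
  calc ‖B * Bᵀ * X‖ = ‖B * (Bᵀ * X)‖ := by rw [Matrix.mul_assoc]
    _ ≤ ‖B‖ * ‖Bᵀ * X‖ := Matrix.l2_opNorm_mul _ _
    _ ≤ 1 * (2 * ‖E‖) := mul_le_mul hBn hBX (norm_nonneg _) zero_le_one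
    _ = 2 * ‖E‖ := one_mul _
end

section
/- Let σ₁ ≥ … ≥ σ_r > 0 with r ≥ 2 and suppose the set S = {i ∈ {1,…,r−1} : σ_i ≥ (r/(r−1))·σ_{i+1}} is nonempty with smallest element r̃. Then σ₁/σ_{r̃} ≤ (r/(r−1))^{r−2} ≤ 4. -/
open Matrix

/-- If r̃ is the smallest index (1-indexed r̃ = k+1) with σ_{r̃} ≥ (r/(r−1))σ_{r̃+1},
then σ₁/σ_{r̃} ≤ (r/(r−1))^{r−2} ≤ 4. -/
theorem stmt8 {r : ℕ} (hr : 2 ≤ r) (s : ℕ → ℝ) (k : ℕ)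
    (hpos : ∀ i, i < r → 0 < s i)
    (hmono : ∀ i, i + 1 < r → s (i + 1) ≤ s i)
    (hk : k + 1 < r)
    (hkmem : ((r : ℝ) / (r - 1)) * s (k + 1) ≤ s k)
    (hkmin : ∀ i, i < k → s i < ((r : ℝ) / (r - 1)) * s (i + 1)) :
    s 0 / s k ≤ ((r : ℝ) / (r - 1)) ^ (r - 2) ∧ ((r : ℝ) / (r - 1)) ^ (r - 2) ≤ 4 := by
  set c : ℝ := (r : ℝ) / (r - 1) with hc
  have hr1 : (1 : ℝ) ≤ (r : ℝ) - 1 := by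
    have : (2 : ℝ) ≤ (r : ℝ) := by exact_mod_cast hr
    linarith
  have hr1pos : (0 : ℝ) < (r : ℝ) - 1 := by linarith
  have hc1 : (1 : ℝ) ≤ c := by
    rw [hc, le_div_iff₀ hr1pos]; linarith
  have hcpos : (0 : ℝ) < c := lt_of_lt_of_le one_pos hc1
  have key : ∀ j, j ≤ k → s 0 ≤ c ^ j * s j := by
    intro j hj
    induction j with
    | zero => simp
    | succ n ih =>
      have hn : n ≤ k := Nat.le_of_succ_le hj
      have h1 := ih hn
      have h2 : s n < c * s (n + 1) := hkmin n (Nat.lt_of_succ_le hj)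
      calc s 0 ≤ c ^ n * s n := h1
        _ ≤ c ^ n * (c * s (n + 1)) := by
            apply mul_le_mul_of_nonneg_left h2.le (pow_nonneg hcpos.le n)
        _ = c ^ (n + 1) * s (n + 1) := by ring
  have hsk : 0 < s k := hpos k (by omega)
  have hkr2 : k ≤ r - 2 := by omega
  constructor
  · have h0 : s 0 ≤ c ^ k * s k := key k le_rfl
    have : s 0 / s k ≤ c ^ k := by
      rw [div_le_iff₀ hsk]; exact h0
    exact this.trans (pow_le_pow_right₀ hc1 hkr2)
  · have hcle : c ≤ Real.exp (1 / ((r : ℝ) - 1)) := by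
      have := Real.add_one_le_exp (1 / ((r : ℝ) - 1))
      have hceq : c = 1 / ((r : ℝ) - 1) + 1 := by
        rw [hc, eq_comm, div_add_one hr1pos.ne']; congr 1; ring
      rw [hceq]; exact this
    have h1 : c ^ (r - 2) ≤ c ^ (r - 1) := pow_le_pow_right₀ hc1 (by omega)
    have h2 : c ^ (r - 1) ≤ Real.exp (1 / ((r : ℝ) - 1)) ^ (r - 1) :=
      pow_le_pow_left₀ hcpos.le hcle _
    have h3 : Real.exp (1 / ((r : ℝ) - 1)) ^ (r - 1) = Real.exp 1 := by
      rw [← Real.exp_nat_mul]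
      congr 1
      have : ((r - 1 : ℕ) : ℝ) = (r : ℝ) - 1 := by
        push_cast [Nat.cast_sub (by omega : 1 ≤ r)]; ring
      rw [this]; field_simp
    have h4 : Real.exp 1 ≤ 4 := by
      have := Real.exp_one_lt_d9
      linarith
    calc c ^ (r - 2) ≤ c ^ (r - 1) := h1
      _ ≤ Real.exp 1 := by rw [← h3]; exact h2
      _ ≤ 4 := h4
end

section
/- Let U, U* ∈ ℝ^{n×r} have orthonormal columns. Then min over orthogonal R ∈ O(r) of ‖U R − U*‖ is at most √2 · ‖U Uᵀ − U* U*ᵀ‖. -/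
open Matrix

/-!
Put `M = Uᵀ U*` and `N = U* - U M = (U* U*ᵀ - U Uᵀ) U*`. Since `Uᵀ N = 0`, for every `R`
the Pythagorean identity `(U R - U*)ᵀ (U R - U*) = (R - M)ᵀ (R - M) + Nᵀ N` holds, so
`‖U R - U*‖² ≤ ‖R - M‖² + ‖N‖²`, and `Nᵀ N = 1 - Mᵀ M`. Take for `R` an orthogonal polar factor
of `M`: as `|1 - σ| ≤ |1 - σ²|` for every singular value `σ ≥ 0` of `M`, it satisfies
`‖R - M‖ ≤ ‖1 - Mᵀ M‖ = ‖N‖²`. With `‖N‖ ≤ 1` and `‖N‖ ≤ ‖U Uᵀ - U* U*ᵀ‖` this gives the bound.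
For invertible `M` the polar factor is `M (Mᵀ M)^(-1/2)`; in general it is a limit point, in the
compact group `O(r)`, of the polar factors of the invertible matrices `M - t • 1`, `t → 0`.
-/

open scoped Matrix.Norms.L2Operator
open Filter Topology

theorem IsCompact.isClosed_setOf_exists_mem {X Y : Type*} [TopologicalSpace X]
    [TopologicalSpace Y] {K : Set Y} (hK : IsCompact K) {p : X → Y → Prop}
    (hp : IsClosed {z : X × Y | p z.1 z.2}) : IsClosed {x | ∃ y ∈ K, p x y} := by
  have := isCompact_iff_compactSpace.mp hK
  have hclosed : IsClosed {z : X × K | p z.1 z.2} :=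
    hp.preimage (continuous_fst.prodMk (continuous_subtype_val.comp continuous_snd))
  convert isClosedMap_fst_of_compactSpace _ hclosed using 1
  ext x
  simp

namespace ContinuousLinearMap

variable {𝕜 E : Type*} [RCLike 𝕜] [NormedAddCommGroup E] [InnerProductSpace 𝕜 E]

theorem IsPositive.norm_le_norm_add_apply {T : E →L[𝕜] E} (hT : T.IsPositive) (x : E) :
    ‖x‖ ≤ ‖x + T x‖ := by
  rcases (norm_nonneg x).eq_or_lt with hx | hx
  · exact hx ▸ norm_nonneg _
  refine le_of_mul_le_mul_left ?_ hx
  calc ‖x‖ * ‖x‖ ≤ ‖x‖ ^ 2 + RCLike.re (inner 𝕜 x (T x)) := by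
        rw [← sq]; exact le_add_of_nonneg_right (hT.re_inner_nonneg_right x)
    _ = RCLike.re (inner 𝕜 x (x + T x)) := by
        rw [inner_add_right, map_add, inner_self_eq_norm_sq]
    _ ≤ ‖x‖ * ‖x + T x‖ := re_inner_le_norm _ _

theorem IsPositive.norm_one_sub_le {T : E →L[𝕜] E} (hT : T.IsPositive) :
    ‖1 - T‖ ≤ ‖1 - T * T‖ := by
  refine opNorm_le_bound _ (norm_nonneg _) fun x => ?_
  calc ‖(1 - T) x‖ ≤ ‖(1 - T) x + T ((1 - T) x)‖ := hT.norm_le_norm_add_apply _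
    _ = ‖(1 - T * T) x‖ := by
        rw [_root_.sub_apply, _root_.sub_apply, one_apply_eq_self, mul_apply_eq_comp, map_sub,
          sub_add_sub_cancel]
    _ ≤ ‖1 - T * T‖ * ‖x‖ := le_opNorm _ _

end ContinuousLinearMap

namespace Matrix

variable {m n k : Type*} [Fintype m] [Fintype n] [DecidableEq n]

theorem l2_opNorm_transpose_mul_self (A : Matrix m n ℝ) : ‖Aᵀ * A‖ = ‖A‖ * ‖A‖ := by
  rw [← conjTranspose_eq_transpose_of_trivial, l2_opNorm_conjTranspose_mul_self]

theorem l2_opNorm_le_one_of_transpose_mul_self_eq_self {A : Matrix n n ℝ} (hA : Aᵀ * A = A) :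
    ‖A‖ ≤ 1 := by
  have h := l2_opNorm_transpose_mul_self A
  rw [hA] at h
  nlinarith [norm_nonneg A]

theorem l2_opNorm_le_one_of_transpose_mul_self_eq_one {A : Matrix m n ℝ} (hA : Aᵀ * A = 1) :
    ‖A‖ ≤ 1 := by
  have h := l2_opNorm_transpose_mul_self A
  have h1 : ‖(1 : Matrix n n ℝ)‖ ≤ 1 :=
    l2_opNorm_le_one_of_transpose_mul_self_eq_self (by rw [transpose_one, Matrix.mul_one])
  rw [hA] at h
  nlinarith [norm_nonneg A]

theorem PosSemidef.l2_opNorm_one_sub_le {P : Matrix n n ℝ} (hP : P.PosSemidef) :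
    ‖1 - P‖ ≤ ‖1 - P * P‖ := by
  have hT : (toEuclideanCLM (𝕜 := ℝ) P).IsPositive := by
    rwa [← ContinuousLinearMap.isPositive_toLinearMap_iff, coe_toEuclideanCLM_eq_toEuclideanLin,
      isPositive_toEuclideanLin_iff]
  simpa only [cstar_norm_def, map_sub, map_one, map_mul] using hT.norm_one_sub_le

theorem isCompact_setOf_transpose_mul_self_eq_one :
    IsCompact {R : Matrix n n ℝ | Rᵀ * R = 1} := by
  refine Metric.isCompact_of_isClosed_isBounded ?_ ?_
  · exact isClosed_eq (continuous_id.matrix_transpose.matrix_mul continuous_id) continuous_const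
  · refine (Metric.isBounded_closedBall (x := 0) (r := 1)).subset fun R hR => ?_
    simpa using l2_opNorm_le_one_of_transpose_mul_self_eq_one hR

open scoped MatrixOrder in
theorem exists_transpose_mul_self_eq_one_l2_opNorm_sub_le_of_isUnit {M : Matrix n n ℝ}
    (hM : IsUnit M) : ∃ R : Matrix n n ℝ, Rᵀ * R = 1 ∧ ‖R - M‖ ≤ ‖1 - Mᵀ * M‖ := by
  have hMM : (Mᵀ * M).PosSemidef := by
    simpa only [conjTranspose_eq_transpose_of_trivial] using posSemidef_conjTranspose_mul_self M
  set P := CFC.sqrt (Mᵀ * M)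
  have hP : P.PosSemidef := (CFC.sqrt_nonneg _).posSemidef
  have hPP : P * P = Mᵀ * M := CFC.sqrt_mul_sqrt_self _ hMM.nonneg
  have hPt : Pᵀ = P := by
    simpa only [conjTranspose_eq_transpose_of_trivial] using hP.isHermitian.eq
  have hPdet : IsUnit P.det := by
    rw [← isUnit_iff_isUnit_det]
    exact isUnit_of_mul_isUnit_left (hPP ▸ ((isUnit_transpose M).mpr hM).mul hM)
  have hR : (M * P⁻¹)ᵀ * (M * P⁻¹) = 1 := by
    rw [transpose_mul, transpose_nonsing_inv, hPt, Matrix.mul_assoc, ← Matrix.mul_assoc Mᵀ, ← hPP,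
      Matrix.mul_assoc, mul_nonsing_inv _ hPdet, Matrix.mul_one, nonsing_inv_mul _ hPdet]
  refine ⟨M * P⁻¹, hR, ?_⟩
  have hRM : M * P⁻¹ - M = M * P⁻¹ * (1 - P) := by
    rw [Matrix.mul_sub, Matrix.mul_one, Matrix.mul_assoc, nonsing_inv_mul _ hPdet, Matrix.mul_one]
  calc ‖M * P⁻¹ - M‖ ≤ ‖M * P⁻¹‖ * ‖1 - P‖ := hRM ▸ l2_opNorm_mul _ _
    _ ≤ 1 * ‖1 - P * P‖ := by
        gcongr
        exacts [l2_opNorm_le_one_of_transpose_mul_self_eq_one hR, hP.l2_opNorm_one_sub_le]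
    _ = ‖1 - Mᵀ * M‖ := by rw [one_mul, hPP]

theorem exists_transpose_mul_self_eq_one_l2_opNorm_sub_le (M : Matrix n n ℝ) :
    ∃ R : Matrix n n ℝ, Rᵀ * R = 1 ∧ ‖R - M‖ ≤ ‖1 - Mᵀ * M‖ := by
  have hclosed : IsClosed {A : Matrix n n ℝ | ∃ R ∈ {R : Matrix n n ℝ | Rᵀ * R = 1},
      ‖R - A‖ ≤ ‖1 - Aᵀ * A‖} :=
    isCompact_setOf_transpose_mul_self_eq_one.isClosed_setOf_exists_mem <|
      isClosed_le (by fun_prop) (by fun_prop)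
  have hunit : ∀ᶠ t in 𝓝[≠] (0 : ℝ), IsUnit (M - t • 1) := by
    filter_upwards [nhdsNE_le_cofinite 0 (finite_spectrum M).eventually_cofinite_notMem] with t ht
    rwa [spectrum.notMem_iff, Algebra.algebraMap_eq_smul_one, ← neg_sub, IsUnit.neg_iff] at ht
  have hlim : Tendsto (fun t : ℝ => M - t • 1) (𝓝[≠] 0) (𝓝 M) := by
    refine tendsto_nhdsWithin_of_tendsto_nhds ?_
    have : Continuous fun t : ℝ => M - t • (1 : Matrix n n ℝ) := by fun_prop
    simpa using this.tendsto 0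
  simpa using hclosed.mem_of_tendsto hlim <|
    hunit.mono fun t ht => exists_transpose_mul_self_eq_one_l2_opNorm_sub_le_of_isUnit ht

theorem transpose_mul_self_mul_sub_of_transpose_mul_eq_zero {U : Matrix m n ℝ} {W : Matrix m k ℝ}
    (hU : Uᵀ * U = 1) (hUW : Uᵀ * W = 0) (X : Matrix n k ℝ) :
    (U * X - W)ᵀ * (U * X - W) = Xᵀ * X + Wᵀ * W := by
  have hWU : Wᵀ * U = 0 := by rw [← transpose_transpose U, ← transpose_mul, hUW, transpose_zero]
  rw [transpose_sub, transpose_mul, Matrix.sub_mul, Matrix.mul_sub, Matrix.mul_sub,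
    Matrix.mul_assoc, ← Matrix.mul_assoc Uᵀ, hU, Matrix.one_mul, Matrix.mul_assoc, hUW,
    ← Matrix.mul_assoc, hWU]
  simp

theorem transpose_mul_self_mul_sub_eq_add {U : Matrix m n ℝ} (hU : Uᵀ * U = 1)
    (R : Matrix n k ℝ) (V : Matrix m k ℝ) :
    (U * R - V)ᵀ * (U * R - V) =
      (R - Uᵀ * V)ᵀ * (R - Uᵀ * V) + (V - U * (Uᵀ * V))ᵀ * (V - U * (Uᵀ * V)) := by
  have hUW : Uᵀ * (V - U * (Uᵀ * V)) = 0 := by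
    rw [Matrix.mul_sub, ← Matrix.mul_assoc, hU, Matrix.one_mul, sub_self]
  have hsplit : U * (R - Uᵀ * V) - (V - U * (Uᵀ * V)) = U * R - V := by
    rw [Matrix.mul_sub, sub_sub_sub_cancel_right]
  rw [← hsplit, transpose_mul_self_mul_sub_of_transpose_mul_eq_zero hU hUW]

variable [DecidableEq m]

theorem l2_opNorm_sub_mul_transpose_mul_le {U V : Matrix m n ℝ} (hV : Vᵀ * V = 1) :
    ‖V - U * (Uᵀ * V)‖ ≤ ‖U * Uᵀ - V * Vᵀ‖ := by
  have h : V - U * (Uᵀ * V) = (V * Vᵀ - U * Uᵀ) * V := by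
    rw [Matrix.sub_mul, Matrix.mul_assoc, hV, Matrix.mul_one, Matrix.mul_assoc]
  calc ‖V - U * (Uᵀ * V)‖ ≤ ‖V * Vᵀ - U * Uᵀ‖ * ‖V‖ := h ▸ l2_opNorm_mul _ _
    _ ≤ ‖V * Vᵀ - U * Uᵀ‖ * 1 := by gcongr; exact l2_opNorm_le_one_of_transpose_mul_self_eq_one hV
    _ = ‖U * Uᵀ - V * Vᵀ‖ := by rw [mul_one, norm_sub_rev]

theorem l2_opNorm_sub_mul_transpose_mul_le_one {U V : Matrix m n ℝ} (hU : Uᵀ * U = 1)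
    (hV : Vᵀ * V = 1) : ‖V - U * (Uᵀ * V)‖ ≤ 1 := by
  have h : V - U * (Uᵀ * V) = (1 - U * Uᵀ) * V := by
    rw [Matrix.sub_mul, Matrix.one_mul, Matrix.mul_assoc]
  have hproj : (1 - U * Uᵀ)ᵀ * (1 - U * Uᵀ) = 1 - U * Uᵀ := by
    rw [transpose_sub, transpose_one, transpose_mul, transpose_transpose, Matrix.sub_mul,
      Matrix.mul_sub, Matrix.mul_sub, Matrix.one_mul, Matrix.mul_one, Matrix.one_mul,
      Matrix.mul_assoc, ← Matrix.mul_assoc Uᵀ, hU, Matrix.one_mul]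
    abel
  calc ‖V - U * (Uᵀ * V)‖ ≤ ‖1 - U * Uᵀ‖ * ‖V‖ := h ▸ l2_opNorm_mul _ _
    _ ≤ 1 * 1 := by
        gcongr
        exacts [l2_opNorm_le_one_of_transpose_mul_self_eq_self hproj,
          l2_opNorm_le_one_of_transpose_mul_self_eq_one hV]
    _ = 1 := one_mul 1

end Matrix

theorem spec_eq_l2_opNorm {m n : ℕ} (A : Matrix (Fin m) (Fin n) ℝ) : spec A = ‖A‖ := rfl

/-- min_{R ∈ O(r)} ‖UR − U*‖ ≤ √2 · ‖UUᵀ − U*U*ᵀ‖. -/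
theorem stmt10 {n r : ℕ}
    (U Ustar : Matrix (Fin n) (Fin r) ℝ)
    (hU : Uᵀ * U = 1) (hUstar : Ustarᵀ * Ustar = 1) :
    ∃ R : Matrix (Fin r) (Fin r) ℝ, Rᵀ * R = 1 ∧
      spec (U * R - Ustar) ≤ Real.sqrt 2 * spec (U * Uᵀ - Ustar * Ustarᵀ) := by
  set M := Uᵀ * Ustar
  set N := Ustar - U * M
  obtain ⟨R, hR, hRM⟩ := exists_transpose_mul_self_eq_one_l2_opNorm_sub_le M
  refine ⟨R, hR, ?_⟩
  have hNN : 1 - Mᵀ * M = Nᵀ * N := by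
    have h := transpose_mul_self_mul_sub_eq_add hU 0 Ustar
    simp only [Matrix.mul_zero, zero_sub, transpose_neg, Matrix.neg_mul, Matrix.mul_neg, neg_neg,
      hUstar] at h
    rw [h, add_sub_cancel_left]
  have hN1 : ‖N‖ ≤ 1 := l2_opNorm_sub_mul_transpose_mul_le_one hU hUstar
  have hNd : ‖N‖ ≤ ‖U * Uᵀ - Ustar * Ustarᵀ‖ := l2_opNorm_sub_mul_transpose_mul_le hUstar
  have hsq : ‖U * R - Ustar‖ ^ 2 ≤ 2 * ‖U * Uᵀ - Ustar * Ustarᵀ‖ ^ 2 :=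
    calc ‖U * R - Ustar‖ ^ 2 = ‖(R - M)ᵀ * (R - M) + Nᵀ * N‖ := by
          rw [sq, ← l2_opNorm_transpose_mul_self, transpose_mul_self_mul_sub_eq_add hU]
      _ ≤ ‖R - M‖ ^ 2 + ‖N‖ ^ 2 := by
          simpa only [l2_opNorm_transpose_mul_self, sq] using
            norm_add_le ((R - M)ᵀ * (R - M)) (Nᵀ * N)
      _ ≤ (‖N‖ ^ 2) ^ 2 + ‖N‖ ^ 2 := by
          gcongr; rwa [sq, ← l2_opNorm_transpose_mul_self, ← hNN]
      _ ≤ 2 * ‖N‖ ^ 2 := by nlinarith [pow_le_one₀ (n := 2) (norm_nonneg N) hN1, sq_nonneg ‖N‖]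
      _ ≤ 2 * ‖U * Uᵀ - Ustar * Ustarᵀ‖ ^ 2 := by gcongr
  rw [spec_eq_l2_opNorm, spec_eq_l2_opNorm, ← Real.sqrt_sq (norm_nonneg (U * Uᵀ - _)),
    ← Real.sqrt_mul zero_le_two]
  exact Real.le_sqrt_of_sq_le hsq
end
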